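/- Let F_q be a finite field, n a positive integer, and C_a, C_b, C_z nonzero F_q-linear subspaces of F_q^n with C_z ⊆ C_b ⊆ C_a, having minimum distances d_a, d_b, d_z respectively. Let α ∈ F_q with α ≠ 0 and α ≠ 1, let C = {(a | a+b | a+αb+z) : a ∈ C_a, b ∈ C_b, z ∈ C_z}, and set d_0 = min{3d_a, 2d_b, d_z}. Then for every r ∈ F_q^{3n} there is at most one codeword c ∈ C with Hamming distance d_H(r, c) ≤ ⌊(d_0 − 1)/2⌋; i.e., every error pattern of weight at most ⌊(d_0 − 1)/2⌋ is uniquely decodable. -/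

import Mathlib

/-- Concatenation `(u | v | w)` of three vectors of length `n` into a vector of length `3n`. -/
def cat3 {F : Type*} {n : ℕ} (u v w : Fin n → F) : Fin (n + n + n) → F :=
  Fin.append (Fin.append u v) w

/-- `d` is the minimum distance of the (nonzero) linear code `C`: it is the least element of
the set of Hamming weights of nonzero codewords of `C`. -/
def IsMinDist {F : Type*} [Field F] [DecidableEq F] {m : ℕ}
    (C : Submodule F (Fin m → F)) (d : ℕ) : Prop :=
  IsLeast {w : ℕ | ∃ c ∈ C, c ≠ 0 ∧ hammingNorm c = w} d

/-- The code `C = {(a | a+b | a+αb+z) : a ∈ C_a, b ∈ C_b, z ∈ C_z}` as a set of words. -/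
def codeSet {F : Type*} [Field F] {n : ℕ} (α : F)
    (Ca Cb Cz : Submodule F (Fin n → F)) : Set (Fin (n + n + n) → F) :=
  {c | ∃ a ∈ Ca, ∃ b ∈ Cb, ∃ z ∈ Cz, c = cat3 a (a + b) (a + α • b + z)}

/-!
A nonzero codeword `(a | a+b | a+αb+z)` is heavy for one of three reasons. If `z ≠ 0`, then in
every coordinate where `z` is nonzero the three blocks cannot all vanish, since
`z = (a+αb+z) - (1-α)a - α(a+b)`. If `z = 0` and `b ≠ 0`, then in every coordinate where `b` is
nonzero the three values `a, a+b, a+αb` are pairwise distinct (as `0, 1, α` are), so at most one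
of them vanishes. If `z = b = 0`, the word is `(a | a | a)`. Hence the code has minimum distance
at least `d₀`, and two codewords within distance `⌊(d₀-1)/2⌋` of the same word coincide by the
triangle inequality.
-/

open Finset

section Hamming

variable {ι : Type*} [Fintype ι] {γ : Type*} [Zero γ] [DecidableEq γ]

theorem hammingNorm_add_hammingNorm_add_hammingNorm (u v w : ι → γ) :
    hammingNorm u + hammingNorm v + hammingNorm w = ∑ i, hammingNorm ![u i, v i, w i] := by
  simp only [hammingNorm, card_filter, Fin.sum_univ_three, sum_add_distrib]
  rfl

theorem mul_hammingNorm_le_of_forall {k : ℕ} {x u v w : ι → γ}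
    (h : ∀ i, x i ≠ 0 → k ≤ hammingNorm ![u i, v i, w i]) :
    k * hammingNorm x ≤ hammingNorm u + hammingNorm v + hammingNorm w := by
  rw [hammingNorm_add_hammingNorm_add_hammingNorm, hammingNorm, card_filter, mul_sum]
  refine sum_le_sum fun i _ => ?_
  by_cases hx : x i = 0
  · simp [hx]
  · simpa [hx] using h i hx

end Hamming

theorem eq_of_hammingDist_le_of_sub_mem {ι γ : Type*} [Fintype ι] [AddGroup γ] [DecidableEq γ]
    {S : Set (ι → γ)} {d : ℕ} (hsub : ∀ c ∈ S, ∀ c' ∈ S, c - c' ∈ S)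
    (hd : ∀ c ∈ S, c ≠ 0 → d ≤ hammingNorm c) {r c c' : ι → γ} (hc : c ∈ S) (hc' : c' ∈ S)
    (hrc : hammingDist r c ≤ (d - 1) / 2) (hrc' : hammingDist r c' ≤ (d - 1) / 2) : c = c' := by
  by_contra hne
  have hdist : hammingDist c c' = hammingNorm (c - c') := by
    simp only [hammingDist, hammingNorm, Pi.sub_apply, ne_eq, sub_eq_zero]
  have hle := hd _ (hsub c hc c' hc') (sub_ne_zero.2 hne)
  have hpos := hammingNorm_pos_iff.2 (sub_ne_zero.2 hne)
  have htri := hammingDist_triangle_left c c' r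
  omega

section Append

variable {F : Type*} {m k n : ℕ}

theorem Fin.append_sub [AddGroup F] (u u' : Fin m → F) (v v' : Fin k → F) :
    Fin.append u v - Fin.append u' v' = Fin.append (u - u') (v - v') := by
  funext i
  refine Fin.addCases (fun j => ?_) (fun j => ?_) i <;> simp

theorem hammingNorm_append [Zero F] [DecidableEq F] (u : Fin m → F) (v : Fin k → F) :
    hammingNorm (Fin.append u v) = hammingNorm u + hammingNorm v := by
  simp only [hammingNorm, card_filter, Fin.sum_univ_add, Fin.append_left, Fin.append_right]

theorem cat3_sub [AddGroup F] (u v w u' v' w' : Fin n → F) :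
    cat3 u v w - cat3 u' v' w' = cat3 (u - u') (v - v') (w - w') := by
  simp only [cat3, Fin.append_sub]

theorem hammingNorm_cat3 [Zero F] [DecidableEq F] (u v w : Fin n → F) :
    hammingNorm (cat3 u v w) = hammingNorm u + hammingNorm v + hammingNorm w := by
  rw [cat3, hammingNorm_append, hammingNorm_append]

end Append

section Code

variable {F : Type*} [Field F] {n : ℕ} {α : F}

theorem IsMinDist.le_hammingNorm [DecidableEq F] {m : ℕ} {C : Submodule F (Fin m → F)} {d : ℕ}
    (hd : IsMinDist C d) {c : Fin m → F} (hc : c ∈ C) (hc0 : c ≠ 0) : d ≤ hammingNorm c :=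
  hd.2 ⟨c, hc, hc0, rfl⟩

theorem sub_mem_codeSet {Ca Cb Cz : Submodule F (Fin n → F)} {c c' : Fin (n + n + n) → F}
    (hc : c ∈ codeSet α Ca Cb Cz) (hc' : c' ∈ codeSet α Ca Cb Cz) :
    c - c' ∈ codeSet α Ca Cb Cz := by
  obtain ⟨a, ha, b, hb, z, hz, rfl⟩ := hc
  obtain ⟨a', ha', b', hb', z', hz', rfl⟩ := hc'
  refine ⟨a - a', sub_mem ha ha', b - b', sub_mem hb hb', z - z', sub_mem hz hz', ?_⟩
  rw [cat3_sub, smul_sub]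
  congr 1 <;> abel

theorem affine_triple_ne_zero {x β ζ : F} (hζ : ζ ≠ 0) :
    ![x, x + β, x + α * β + ζ] ≠ 0 := by
  intro h
  have h0 : x = 0 := congrFun h 0
  have h1 : x + β = 0 := congrFun h 1
  have h2 : x + α * β + ζ = 0 := congrFun h 2
  exact hζ (by linear_combination h2 - (1 - α) * h0 - α * h1)

variable [DecidableEq F]

theorem two_le_hammingNorm_affine_triple (hα0 : α ≠ 0) (hα1 : α ≠ 1) {x β : F} (hβ : β ≠ 0) :
    2 ≤ hammingNorm ![x, x + β, x + α * β] := by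
  rw [hammingNorm, Nat.succ_le_iff, one_lt_card]
  by_cases hx : x = 0
  · refine ⟨1, ?_, 2, ?_, by decide⟩ <;> simp [hx, hβ, hα0]
  by_cases hxβ : x + β = 0
  · have hxαβ : x + α * β ≠ 0 := fun h =>
      mul_ne_zero (sub_ne_zero.2 hα1) hβ (by linear_combination h - hxβ)
    refine ⟨0, ?_, 2, ?_, by decide⟩ <;> simp [hx, hxαβ]
  · refine ⟨0, ?_, 1, ?_, by decide⟩ <;> simp [hx, hxβ]

theorem hammingNorm_le_hammingNorm_cat3 (a b z : Fin n → F) :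
    hammingNorm z ≤ hammingNorm (cat3 a (a + b) (a + α • b + z)) := by
  rw [hammingNorm_cat3, ← one_mul (hammingNorm z)]
  refine mul_hammingNorm_le_of_forall fun i hzi => ?_
  exact Nat.one_le_iff_ne_zero.2 (hammingNorm_ne_zero_iff.2 (affine_triple_ne_zero hzi))

theorem two_mul_hammingNorm_le_hammingNorm_cat3 (hα0 : α ≠ 0) (hα1 : α ≠ 1)
    (a b : Fin n → F) : 2 * hammingNorm b ≤ hammingNorm (cat3 a (a + b) (a + α • b)) := by
  rw [hammingNorm_cat3]
  exact mul_hammingNorm_le_of_forall fun i hbi => two_le_hammingNorm_affine_triple hα0 hα1 hbi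

theorem min_le_hammingNorm_of_mem_codeSet {Ca Cb Cz : Submodule F (Fin n → F)}
    {da db dz : ℕ} (hda : IsMinDist Ca da) (hdb : IsMinDist Cb db) (hdz : IsMinDist Cz dz)
    (hα0 : α ≠ 0) (hα1 : α ≠ 1) {c : Fin (n + n + n) → F} (hc : c ∈ codeSet α Ca Cb Cz)
    (hc0 : c ≠ 0) : min (3 * da) (min (2 * db) dz) ≤ hammingNorm c := by
  obtain ⟨a, ha, b, hb, z, hz, rfl⟩ := hc
  by_cases hz0 : z = 0
  · subst hz0
    simp only [add_zero] at hc0 ⊢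
    by_cases hb0 : b = 0
    · subst hb0
      simp only [smul_zero, add_zero] at hc0 ⊢
      rw [← hammingNorm_ne_zero_iff, hammingNorm_cat3] at hc0
      have hwa := hda.le_hammingNorm ha (hammingNorm_ne_zero_iff.1 (by omega))
      rw [hammingNorm_cat3]
      omega
    · have hcat := two_mul_hammingNorm_le_hammingNorm_cat3 hα0 hα1 a b
      have hwb := hdb.le_hammingNorm hb hb0
      omega
  · have hcat := hammingNorm_le_hammingNorm_cat3 (α := α) a b z
    have hwz := hdz.le_hammingNorm hz hz0
    omega

end Code

theorem stmt_12_general (F : Type*) [Field F] [DecidableEq F] (n : ℕ)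
    (Ca Cb Cz : Submodule F (Fin n → F))
    (da db dz : ℕ) (hda : IsMinDist Ca da) (hdb : IsMinDist Cb db) (hdz : IsMinDist Cz dz)
    (α : F) (hα0 : α ≠ 0) (hα1 : α ≠ 1)
    (d0 : ℕ) (hd0 : d0 = min (3 * da) (min (2 * db) dz)) :
    ∀ r : Fin (n + n + n) → F, ∀ c ∈ codeSet α Ca Cb Cz, ∀ c' ∈ codeSet α Ca Cb Cz,
      hammingDist r c ≤ (d0 - 1) / 2 → hammingDist r c' ≤ (d0 - 1) / 2 → c = c' := by
  subst hd0
  intro r c hc c' hc'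
  exact eq_of_hammingDist_le_of_sub_mem (fun _ hc _ hc' => sub_mem_codeSet hc hc')
    (fun _ hc hc0 => min_le_hammingNorm_of_mem_codeSet hda hdb hdz hα0 hα1 hc hc0) hc hc'

/-- Let `C_z ⊆ C_b ⊆ C_a ⊆ F^n` be nonzero subspaces with minimum
distances `d_z, d_b, d_a`, let `α ≠ 0, 1`, `C = {(a | a+b | a+αb+z)}` and
`d₀ = min {3d_a, 2d_b, d_z}`. Then for every `r ∈ F^{3n}` there is at most one `c ∈ C` with
`d_H(r, c) ≤ ⌊(d₀ − 1)/2⌋`: every error of weight `≤ ⌊(d₀ − 1)/2⌋` is uniquely decodable. -/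
theorem stmt_12 (F : Type*) [Field F] [Fintype F] [DecidableEq F] (n : ℕ) (hn : 0 < n)
    (Ca Cb Cz : Submodule F (Fin n → F))
    (hCa : Ca ≠ ⊥) (hCb : Cb ≠ ⊥) (hCz : Cz ≠ ⊥)
    (hzb : Cz ≤ Cb) (hba : Cb ≤ Ca)
    (da db dz : ℕ) (hda : IsMinDist Ca da) (hdb : IsMinDist Cb db) (hdz : IsMinDist Cz dz)
    (α : F) (hα0 : α ≠ 0) (hα1 : α ≠ 1)
    (d0 : ℕ) (hd0 : d0 = min (3 * da) (min (2 * db) dz)) :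
    ∀ r : Fin (n + n + n) → F, ∀ c ∈ codeSet α Ca Cb Cz, ∀ c' ∈ codeSet α Ca Cb Cz,
      hammingDist r c ≤ (d0 - 1) / 2 → hammingDist r c' ≤ (d0 - 1) / 2 → c = c' :=
  stmt_12_general F n Ca Cb Cz da db dz hda hdb hdz α hα0 hα1 d0 hd0
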